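/- arXiv:2211.11493 — 4 statements merged into one kernel-verified Lean document; each statement's English description precedes it below -/
import Mathlib

section
/- Let L and M be bounded lattices, r : L → M a monotone retraction with monotone pseudo-inverse s : M → L (i.e., r ∘ s = id_M), such that r(x) = 0_M iff x = 0_L and r(x) = 1_M iff x = 1_L. If O is a quasi-overlap function on M, then O^E : L² → L defined by O^E(x,y) = s(O(r(x), r(y))) is a quasi-overlap function on L. -/
/-- `O` is a quasi-overlap function on the bounded lattice `L`. -/
def IsQuasiOverlap {L : Type*} [Lattice L] [BoundedOrder L] (O : L → L → L) : Prop :=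
  (∀ x y, O x y = O y x) ∧
  (∀ x y, O x y = ⊥ ↔ x = ⊥ ∨ y = ⊥) ∧
  (∀ x y, O x y = ⊤ ↔ x = ⊤ ∧ y = ⊤) ∧
  (∀ x y z, y ≤ z → O x y ≤ O x z) ∧
  (∀ x y z, y ≤ z → O y x ≤ O z x)

theorem Function.LeftInverse.eq_iff_of_forall_eq_iff {α β : Type*} {r : α → β} {s : β → α}
    (hrs : Function.LeftInverse r s) {b : β} {c : α} (h : ∀ x, r x = b ↔ x = c) (a : β) :
    s a = c ↔ a = b := by
  rw [← h, hrs a]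

theorem stmt_0 {L M : Type*} [Lattice L] [BoundedOrder L] [Lattice M] [BoundedOrder M]
    (r : L → M) (s : M → L) (hr : Monotone r) (hs : Monotone s)
    (hrs : ∀ a : M, r (s a) = a)
    (h0 : ∀ x : L, r x = ⊥ ↔ x = ⊥) (h1 : ∀ x : L, r x = ⊤ ↔ x = ⊤)
    (O : M → M → M) (hO : IsQuasiOverlap O) :
    IsQuasiOverlap (fun x y : L => s (O (r x) (r y))) := by
  obtain ⟨hcomm, hbot, htop, hmono_right, hmono_left⟩ := hO
  have hsr : Function.LeftInverse r s := hrs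
  refine ⟨fun x y => congrArg s (hcomm _ _), fun x y => ?_, fun x y => ?_,
    fun x y z hyz => hs (hmono_right _ _ _ (hr hyz)),
    fun x y z hyz => hs (hmono_left _ _ _ (hr hyz))⟩
  · rw [hsr.eq_iff_of_forall_eq_iff h0, hbot, h0, h0]
  · rw [hsr.eq_iff_of_forall_eq_iff h1, htop, h1, h1]
end

section
/- Let L and M be bounded lattices, r : L → M a monotone retraction with monotone pseudo-inverse s : M → L, such that r(x) = 0_M iff x = 0_L and r(x) = 1_M iff x = 1_L. If G is a quasi-grouping function on M, then G^E : L² → L defined by G^E(x,y) = s(G(r(x), r(y))) is a quasi-grouping function on L. -/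
/-- `G` is a quasi-grouping function on the bounded lattice `L`. -/
def IsQuasiGrouping {L : Type*} [Lattice L] [BoundedOrder L] (G : L → L → L) : Prop :=
  (∀ x y, G x y = G y x) ∧
  (∀ x y, G x y = ⊥ ↔ x = ⊥ ∧ y = ⊥) ∧
  (∀ x y, G x y = ⊤ ↔ x = ⊤ ∨ y = ⊤) ∧
  (∀ x y z, y ≤ z → G x y ≤ G x z) ∧
  (∀ x y z, y ≤ z → G y x ≤ G z x)

theorem Function.LeftInverse.eq_iff_of_apply_eq_iff {α β : Type*} {r : α → β} {s : β → α}
    (hrs : Function.LeftInverse r s) {a : α} {b : β} (h : ∀ x, r x = b ↔ x = a) (y : β) :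
    s y = a ↔ y = b := by
  rw [← h, hrs y]

theorem stmt_2 {L M : Type*} [Lattice L] [BoundedOrder L] [Lattice M] [BoundedOrder M]
    (r : L → M) (s : M → L) (hr : Monotone r) (hs : Monotone s)
    (hrs : ∀ a : M, r (s a) = a)
    (h0 : ∀ x : L, r x = ⊥ ↔ x = ⊥) (h1 : ∀ x : L, r x = ⊤ ↔ x = ⊤)
    (G : M → M → M) (hG : IsQuasiGrouping G) :
    IsQuasiGrouping (fun x y : L => s (G (r x) (r y))) := by
  obtain ⟨hcomm, hbot, htop, hmono_right, hmono_left⟩ := hG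
  have hs0 := Function.LeftInverse.eq_iff_of_apply_eq_iff hrs h0
  have hs1 := Function.LeftInverse.eq_iff_of_apply_eq_iff hrs h1
  refine ⟨fun x y => ?_, fun x y => ?_, fun x y => ?_,
    fun x y z hyz => hs (hmono_right _ _ _ (hr hyz)),
    fun x y z hyz => hs (hmono_left _ _ _ (hr hyz))⟩
  · simp only [hcomm]
  · simp only [hs0, hbot, h0]
  · simp only [hs1, htop, h1]
end

section
/- Let L and M be bounded lattices, r : L → M a monotone retraction with monotone pseudo-inverse s : M → L satisfying r(x) = 0_M iff x = 0_L. If O is a quasi-overlap function on M, then O^E(x,y) = s(O(r(x), r(y))) satisfies O^E(x,y) = 0_L if and only if x = 0_L or y = 0_L. -/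
theorem IsQuasiOverlap.eq_bot_iff {L : Type*} [Lattice L] [BoundedOrder L] {O : L → L → L}
    (hO : IsQuasiOverlap O) (x y : L) : O x y = ⊥ ↔ x = ⊥ ∨ y = ⊥ :=
  hO.2.1 x y

theorem Function.LeftInverse.eq_bot_iff_of_eq_bot_iff {α β : Type*} [Bot α] [Bot β]
    {r : α → β} {s : β → α} (hrs : Function.LeftInverse r s)
    (h0 : ∀ x, r x = ⊥ ↔ x = ⊥) (z : β) : s z = ⊥ ↔ z = ⊥ := by
  rw [← h0, hrs z]

theorem stmt_4_general {L M : Type*} [Lattice L] [BoundedOrder L] [Lattice M] [BoundedOrder M]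
    (r : L → M) (s : M → L)
    (hrs : ∀ a : M, r (s a) = a)
    (h0 : ∀ x : L, r x = ⊥ ↔ x = ⊥)
    (O : M → M → M) (hO : IsQuasiOverlap O) :
    ∀ x y : L, s (O (r x) (r y)) = ⊥ ↔ x = ⊥ ∨ y = ⊥ := by
  intro x y
  rw [Function.LeftInverse.eq_bot_iff_of_eq_bot_iff hrs h0, hO.eq_bot_iff, h0, h0]

theorem stmt_4 {L M : Type*} [Lattice L] [BoundedOrder L] [Lattice M] [BoundedOrder M]
    (r : L → M) (s : M → L) (hr : Monotone r) (hs : Monotone s)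
    (hrs : ∀ a : M, r (s a) = a)
    (h0 : ∀ x : L, r x = ⊥ ↔ x = ⊥)
    (O : M → M → M) (hO : IsQuasiOverlap O) :
    ∀ x y : L, s (O (r x) (r y)) = ⊥ ↔ x = ⊥ ∨ y = ⊥ :=
  stmt_4_general r s hrs h0 O hO
end

section
/- Let L and M be bounded lattices, r : L → M a monotone retraction with monotone pseudo-inverse s : M → L satisfying r(x) = 1_M iff x = 1_L. If O is a quasi-overlap function on M, then O^E(x,y) = s(O(r(x), r(y))) satisfies O^E(x,y) = 1_L if and only if x = 1_L and y = 1_L. -/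
theorem IsQuasiOverlap.eq_top_iff {M : Type*} [Lattice M] [BoundedOrder M] {O : M → M → M}
    (hO : IsQuasiOverlap O) (a b : M) : O a b = ⊤ ↔ a = ⊤ ∧ b = ⊤ :=
  hO.2.2.1 a b

theorem Function.LeftInverse.eq_top_iff_of_forall_eq_top_iff {L M : Type*} [Top L] [Top M]
    {r : L → M} {s : M → L} (hrs : Function.LeftInverse r s)
    (h1 : ∀ x : L, r x = ⊤ ↔ x = ⊤) (a : M) : s a = ⊤ ↔ a = ⊤ := by
  constructor
  · intro h
    rw [← hrs a, h, (h1 ⊤).2 rfl]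
  · rintro rfl
    exact (h1 _).1 (hrs ⊤)

theorem stmt_5_general {L M : Type*} [Lattice L] [BoundedOrder L] [Lattice M] [BoundedOrder M]
    (r : L → M) (s : M → L)
    (hrs : ∀ a : M, r (s a) = a)
    (h1 : ∀ x : L, r x = ⊤ ↔ x = ⊤)
    (O : M → M → M) (hO : IsQuasiOverlap O) :
    ∀ x y : L, s (O (r x) (r y)) = ⊤ ↔ x = ⊤ ∧ y = ⊤ := by
  intro x y
  rw [Function.LeftInverse.eq_top_iff_of_forall_eq_top_iff hrs h1, hO.eq_top_iff, h1, h1]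

theorem stmt_5 {L M : Type*} [Lattice L] [BoundedOrder L] [Lattice M] [BoundedOrder M]
    (r : L → M) (s : M → L) (hr : Monotone r) (hs : Monotone s)
    (hrs : ∀ a : M, r (s a) = a)
    (h1 : ∀ x : L, r x = ⊤ ↔ x = ⊤)
    (O : M → M → M) (hO : IsQuasiOverlap O) :
    ∀ x y : L, s (O (r x) (r y)) = ⊤ ↔ x = ⊤ ∧ y = ⊤ :=
  stmt_5_general r s hrs h1 O hO
end
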